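/- arXiv:2603.28112 — 6 statements merged into one kernel-verified Lean document; each statement's English description precedes it below -/
import Mathlib

section
/- Let a, a' be nonzero real numbers and δ, δ' > 0. For λ, u, v ∈ ℝ define the complex number 2π·f_{a,δ}(λ;u,v) = −exp(−δ(|u|+|v|)(|a⁻¹|+1))·(2cos λ + 1) + exp(−δ|u+v|(|a⁻¹|+1)) + exp(−δ(|v·a⁻¹| + |v + a⁻¹u| + |u|))·e^{−iλ} + exp(−δ(|u·a⁻¹| + |u + a⁻¹v| + |v|))·e^{iλ}. If f_{a,δ}(λ;u,v) = f_{a',δ'}(λ;u,v) for all λ, u, v ∈ ℝ, then a = a' and δ = δ'. -/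
open Real

/-- The generalized spectrum of the possibly non-invertible MA(1) model with
Cauchy innovations of scale `δ` and coefficient `a`. -/
noncomputable def cauchyMA1Spec (a δ : ℝ) (lam u v : ℝ) : ℂ :=
  (1 / (2 * Real.pi)) *
    ( -Complex.exp ((-(δ * (|u| + |v|) * (|a⁻¹| + 1)) : ℝ) : ℂ) *
        ((2 * Real.cos lam + 1 : ℝ) : ℂ)
      + Complex.exp ((-(δ * |u + v| * (|a⁻¹| + 1)) : ℝ) : ℂ)
      + Complex.exp ((-(δ * (|v * a⁻¹| + |v + a⁻¹ * u| + |u|)) : ℝ) : ℂ) *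
          Complex.exp (-(lam : ℂ) * Complex.I)
      + Complex.exp ((-(δ * (|u * a⁻¹| + |u + a⁻¹ * v| + |v|)) : ℝ) : ℂ) *
          Complex.exp ((lam : ℂ) * Complex.I) )

lemma spec_re (a δ lam u v : ℝ) :
    (cauchyMA1Spec a δ lam u v).re = (1/(2*Real.pi)) *
      (-Real.exp (-(δ * (|u| + |v|) * (|a⁻¹| + 1))) * (2 * Real.cos lam + 1)
        + Real.exp (-(δ * |u + v| * (|a⁻¹| + 1)))
        + Real.exp (-(δ * (|v * a⁻¹| + |v + a⁻¹ * u| + |u|))) * Real.cos lam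
        + Real.exp (-(δ * (|u * a⁻¹| + |u + a⁻¹ * v| + |v|))) * Real.cos lam) := by
  have h1 : (-(lam:ℂ)) * Complex.I = ((-lam : ℝ):ℂ) * Complex.I := by push_cast; ring
  have hc : (1 / (2 * (Real.pi:ℂ))) = ((1/(2*Real.pi) : ℝ) : ℂ) := by push_cast; ring
  rw [cauchyMA1Spec, h1, hc]
  simp only [Complex.exp_ofReal_mul_I_re, Complex.mul_re, Complex.mul_im, Complex.add_re,
    Complex.add_im, Complex.neg_re, Complex.neg_im, Complex.ofReal_re, Complex.ofReal_im,
    Complex.exp_ofReal_re, Complex.exp_ofReal_im, Complex.exp_ofReal_mul_I_im,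
    Real.cos_neg, Real.sin_neg]
  ring

lemma spec_im (a δ lam u v : ℝ) :
    (cauchyMA1Spec a δ lam u v).im = (1/(2*Real.pi)) *
      ((Real.exp (-(δ * (|u * a⁻¹| + |u + a⁻¹ * v| + |v|)))
        - Real.exp (-(δ * (|v * a⁻¹| + |v + a⁻¹ * u| + |u|)))) * Real.sin lam) := by
  have h1 : (-(lam:ℂ)) * Complex.I = ((-lam : ℝ):ℂ) * Complex.I := by push_cast; ring
  have hc : (1 / (2 * (Real.pi:ℂ))) = ((1/(2*Real.pi) : ℝ) : ℂ) := by push_cast; ring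
  rw [cauchyMA1Spec, h1, hc]
  simp only [Complex.exp_ofReal_mul_I_re, Complex.mul_re, Complex.mul_im, Complex.add_re,
    Complex.add_im, Complex.neg_re, Complex.neg_im, Complex.ofReal_re, Complex.ofReal_im,
    Complex.exp_ofReal_re, Complex.exp_ofReal_im, Complex.exp_ofReal_mul_I_im,
    Real.cos_neg, Real.sin_neg]
  ring

/-- Identifiability of the Cauchy MA(1) model from its generalized spectrum. -/
theorem cauchyMA1_identifiable (a a' δ δ' : ℝ) (ha : a ≠ 0) (ha' : a' ≠ 0)
    (hδ : 0 < δ) (hδ' : 0 < δ')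
    (h : ∀ lam u v : ℝ, cauchyMA1Spec a δ lam u v = cauchyMA1Spec a' δ' lam u v) :
    a = a' ∧ δ = δ' := by
  have hπ : (1/(2*Real.pi)) ≠ 0 := by positivity
  have Hre : ∀ lam u v : ℝ,
      -Real.exp (-(δ * (|u| + |v|) * (|a⁻¹| + 1))) * (2 * Real.cos lam + 1)
        + Real.exp (-(δ * |u + v| * (|a⁻¹| + 1)))
        + Real.exp (-(δ * (|v * a⁻¹| + |v + a⁻¹ * u| + |u|))) * Real.cos lam
        + Real.exp (-(δ * (|u * a⁻¹| + |u + a⁻¹ * v| + |v|))) * Real.cos lam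
      = -Real.exp (-(δ' * (|u| + |v|) * (|a'⁻¹| + 1))) * (2 * Real.cos lam + 1)
        + Real.exp (-(δ' * |u + v| * (|a'⁻¹| + 1)))
        + Real.exp (-(δ' * (|v * a'⁻¹| + |v + a'⁻¹ * u| + |u|))) * Real.cos lam
        + Real.exp (-(δ' * (|u * a'⁻¹| + |u + a'⁻¹ * v| + |v|))) * Real.cos lam := by
    intro lam u v
    have H := congrArg Complex.re (h lam u v)
    rw [spec_re, spec_re] at H
    exact mul_left_cancel₀ hπ H
  have Him : ∀ lam u v : ℝ,
      (Real.exp (-(δ * (|u * a⁻¹| + |u + a⁻¹ * v| + |v|)))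
        - Real.exp (-(δ * (|v * a⁻¹| + |v + a⁻¹ * u| + |u|)))) * Real.sin lam
      = (Real.exp (-(δ' * (|u * a'⁻¹| + |u + a'⁻¹ * v| + |v|)))
        - Real.exp (-(δ' * (|v * a'⁻¹| + |v + a'⁻¹ * u| + |u|)))) * Real.sin lam := by
    intro lam u v
    have H := congrArg Complex.im (h lam u v)
    rw [spec_im, spec_im] at H
    exact mul_left_cancel₀ hπ H
  -- Step 1: δ(|a⁻¹|+1) = δ'(|a'⁻¹|+1)
  have e0 := Hre 0 1 (-1)
  have epi := Hre Real.pi 1 (-1)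
  rw [Real.cos_zero] at e0
  rw [Real.cos_pi] at epi
  have habs1 : |(1:ℝ)| = 1 := abs_one
  have habsm1 : |(-1:ℝ)| = 1 := by norm_num
  have hz : |(1:ℝ) + -1| = 0 := by norm_num
  rw [habs1, habsm1, hz] at e0 epi
  have hz1 : Real.exp (-(δ * 0 * (|a⁻¹| + 1))) = 1 := by norm_num
  have hz1' : Real.exp (-(δ' * 0 * (|a'⁻¹| + 1))) = 1 := by norm_num
  rw [hz1, hz1'] at e0 epi
  have hPeq : Real.exp (-(δ * ((1:ℝ) + 1) * (|a⁻¹| + 1)))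
      = Real.exp (-(δ' * ((1:ℝ) + 1) * (|a'⁻¹| + 1))) := by linarith
  have hs : δ * (|a⁻¹| + 1) = δ' * (|a'⁻¹| + 1) := by
    have := Real.exp_eq_exp.mp hPeq
    linarith
  -- Step 2: signed equations at u = 1, v = ±T
  set T : ℝ := 1 + |a⁻¹| + |a'⁻¹| with hTdef
  have hbpos : 0 < |a⁻¹| := abs_pos.mpr (inv_ne_zero ha)
  have hbpos' : 0 < |a'⁻¹| := abs_pos.mpr (inv_ne_zero ha')
  have hT1 : 1 < T := by simp only [hTdef]; linarith
  have hTpos : 0 < T := by linarith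
  have habsT : |T| = T := abs_of_pos hTpos
  have habsnT : |(-T)| = T := by rw [abs_neg]; exact habsT
  have hblt : a⁻¹ ≤ |a⁻¹| := le_abs_self _
  have hbgt : -|a⁻¹| ≤ a⁻¹ := neg_abs_le _
  have hblt' : a'⁻¹ ≤ |a'⁻¹| := le_abs_self _
  have hbgt' : -|a'⁻¹| ≤ a'⁻¹ := neg_abs_le _
  -- abs facts for v = T
  have hA1 : |T * a⁻¹| = T * |a⁻¹| := by rw [abs_mul, habsT]
  have hA1' : |T * a'⁻¹| = T * |a'⁻¹| := by rw [abs_mul, habsT]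
  have hA2 : |T + a⁻¹ * 1| = T + a⁻¹ := by
    rw [mul_one]; exact abs_of_nonneg (by simp only [hTdef]; linarith)
  have hA2' : |T + a'⁻¹ * 1| = T + a'⁻¹ := by
    rw [mul_one]; exact abs_of_nonneg (by simp only [hTdef]; linarith)
  have hA3 : |(-T) * a⁻¹| = T * |a⁻¹| := by rw [abs_mul, habsnT]
  have hA3' : |(-T) * a'⁻¹| = T * |a'⁻¹| := by rw [abs_mul, habsnT]
  have hA4 : |(-T) + a⁻¹ * 1| = T - a⁻¹ := by
    rw [mul_one]; rw [abs_of_nonpos (by simp only [hTdef]; linarith)]; ring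
  have hA4' : |(-T) + a'⁻¹ * 1| = T - a'⁻¹ := by
    rw [mul_one]; rw [abs_of_nonpos (by simp only [hTdef]; linarith)]; ring
  -- The C = C' extraction at (u,v) = (1,T)
  have e0T := Hre 0 1 T
  have eiT := Him (Real.pi/2) 1 T
  rw [Real.cos_zero] at e0T
  rw [Real.sin_pi_div_two] at eiT
  have hPT : Real.exp (-(δ * (|(1:ℝ)| + |T|) * (|a⁻¹| + 1)))
      = Real.exp (-(δ' * (|(1:ℝ)| + |T|) * (|a'⁻¹| + 1))) := by
    rw [Real.exp_eq_exp]; rw [habs1, habsT]; linear_combination (-(1 + T)) * hs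
  have hQT : Real.exp (-(δ * |1 + T| * (|a⁻¹| + 1)))
      = Real.exp (-(δ' * |1 + T| * (|a'⁻¹| + 1))) := by
    rw [Real.exp_eq_exp]; linear_combination (-|1 + T|) * hs
  have hCT : Real.exp (-(δ * (|T * a⁻¹| + |T + a⁻¹ * 1| + |(1:ℝ)|)))
      = Real.exp (-(δ' * (|T * a'⁻¹| + |T + a'⁻¹ * 1| + |(1:ℝ)|))) := by
    linarith
  have E1 : δ * (T * |a⁻¹| + (T + a⁻¹) + 1) = δ' * (T * |a'⁻¹| + (T + a'⁻¹) + 1) := by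
    have := Real.exp_eq_exp.mp hCT
    rw [hA1, hA1', hA2, hA2', habs1] at this
    linarith
  -- The C = C' extraction at (u,v) = (1,-T)
  have e0T' := Hre 0 1 (-T)
  have eiT' := Him (Real.pi/2) 1 (-T)
  rw [Real.cos_zero] at e0T'
  rw [Real.sin_pi_div_two] at eiT'
  have hPT' : Real.exp (-(δ * (|(1:ℝ)| + |(-T)|) * (|a⁻¹| + 1)))
      = Real.exp (-(δ' * (|(1:ℝ)| + |(-T)|) * (|a'⁻¹| + 1))) := by
    rw [Real.exp_eq_exp]; rw [habs1, habsnT]; linear_combination (-(1 + T)) * hs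
  have hQT' : Real.exp (-(δ * |1 + -T| * (|a⁻¹| + 1)))
      = Real.exp (-(δ' * |1 + -T| * (|a'⁻¹| + 1))) := by
    rw [Real.exp_eq_exp]; linear_combination (-|1 + -T|) * hs
  have hCT' : Real.exp (-(δ * (|(-T) * a⁻¹| + |(-T) + a⁻¹ * 1| + |(1:ℝ)|)))
      = Real.exp (-(δ' * (|(-T) * a'⁻¹| + |(-T) + a'⁻¹ * 1| + |(1:ℝ)|))) := by
    linarith
  have E2 : δ * (T * |a⁻¹| + (T - a⁻¹) + 1) = δ' * (T * |a'⁻¹| + (T - a'⁻¹) + 1) := by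
    have := Real.exp_eq_exp.mp hCT'
    rw [hA3, hA3', hA4, hA4', habs1] at this
    linarith
  -- Conclude
  have hdelta : δ = δ' := by linear_combination (1/2) * E1 + (1/2) * E2 - T * hs
  have hinv : a⁻¹ = a'⁻¹ := by
    have h2 : δ * a⁻¹ = δ * a'⁻¹ := by rw [hdelta] at E1 E2 ⊢; linear_combination (1/2) * E1 - (1/2) * E2
    exact mul_left_cancel₀ (ne_of_gt hδ) h2
  exact ⟨inv_injective hinv, hdelta⟩
end

section
/- For a real number a with |a| ≠ 1 and δ > 0 define, for ℓ ∈ ℤ and u, v ∈ ℝ: if |a| < 1 and ℓ ≥ 0, C_{ℓ,a,δ}(u,v) = exp(−(δ/(1−|a|))·(|u·a^ℓ + v| + |u|(1 − |a|^ℓ))) − exp(−δ(|u|+|v|)/(1−|a|)); if |a| > 1 and ℓ ≥ 0, C_{ℓ,a,δ}(u,v) = exp(−(δ|a⁻¹|/(1−|a⁻¹|))·(|v·a^{−ℓ} + u| + |v|(1 − |a^{−ℓ}|))) − exp(−δ(|u|+|v|)·|a⁻¹|/(1−|a⁻¹|)); and for ℓ < 0, C_{ℓ,a,δ}(u,v)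 = C_{|ℓ|,a,δ}(v,u). Then the family of coefficients identifies the parameters: if a, a' are real with |a| ≠ 1, |a'| ≠ 1 and δ, δ' > 0 satisfy C_{ℓ,a,δ}(u,v) = C_{ℓ,a',δ'}(u,v) for all ℓ ∈ ℤ and all u, v ∈ ℝ, then a = a' and δ = δ'. -/
open Real

/-- Fourier coefficients of the generalized spectrum of the possibly non-causal
Cauchy AR(1) model, for nonnegative lag `ℓ`. -/
noncomputable def cauchyAR1CoefNN (a δ : ℝ) (ℓ : ℤ) (u v : ℝ) : ℝ :=
  if |a| < 1 then
    Real.exp (-(δ / (1 - |a|)) * (|u * a ^ ℓ + v| + |u| * (1 - |a| ^ ℓ)))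
      - Real.exp (-(δ * (|u| + |v|) / (1 - |a|)))
  else
    Real.exp (-(δ * |a⁻¹| / (1 - |a⁻¹|)) * (|v * a ^ (-ℓ) + u| + |v| * (1 - |a ^ (-ℓ)|)))
      - Real.exp (-(δ * (|u| + |v|) * |a⁻¹| / (1 - |a⁻¹|)))

/-- Fourier coefficients of the generalized spectrum of the possibly non-causal
Cauchy AR(1) model, for arbitrary lag `ℓ ∈ ℤ`. -/
noncomputable def cauchyAR1Coef (a δ : ℝ) (ℓ : ℤ) (u v : ℝ) : ℝ :=
  if 0 ≤ ℓ then cauchyAR1CoefNN a δ ℓ u v else cauchyAR1CoefNN a δ (-ℓ) v u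


noncomputable def carC (a δ : ℝ) : ℝ :=
  if |a| < 1 then δ / (1 - |a|) else δ * |a⁻¹| / (1 - |a⁻¹|)

noncomputable def carE (a u v : ℝ) : ℝ :=
  if |a| < 1 then |u * a + v| + |u| * (1 - |a|) else |v * a⁻¹ + u| + |v| * (1 - |a⁻¹|)

lemma abs_inv_mem {a : ℝ} (h : 1 < |a|) : 0 < |a⁻¹| ∧ |a⁻¹| < 1 := by
  have h0 : a ≠ 0 := by
    intro h'; rw [h', abs_zero] at h; linarith
  rw [abs_inv]
  exact ⟨inv_pos.mpr (by linarith), inv_lt_one_of_one_lt₀ h⟩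

lemma carC_pos {a δ : ℝ} (ha : |a| ≠ 1) (hδ : 0 < δ) : 0 < carC a δ := by
  unfold carC
  rcases ha.lt_or_gt with h | h
  · rw [if_pos h]; exact div_pos hδ (by linarith)
  · rw [if_neg (not_lt.mpr h.le)]
    obtain ⟨h1, h2⟩ := abs_inv_mem h
    exact div_pos (mul_pos hδ h1) (by linarith)

lemma coef_zero (a δ : ℝ) : cauchyAR1Coef a δ 0 1 (-1) = 1 - Real.exp (-(2 * carC a δ)) := by
  unfold cauchyAR1Coef cauchyAR1CoefNN carC
  rw [if_pos le_rfl]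
  split
  · norm_num
    ring
  · norm_num
    ring_nf

lemma coef_one (a δ u v : ℝ) :
    cauchyAR1Coef a δ 1 u v =
      Real.exp (-(carC a δ * carE a u v)) - Real.exp (-(carC a δ * (|u| + |v|))) := by
  unfold cauchyAR1Coef cauchyAR1CoefNN carC carE
  rw [if_pos (by norm_num : (0:ℤ) ≤ 1)]
  split
  · congr 1 <;> [skip; congr 1] <;> [congr 1; skip] <;> simp [zpow_one] <;> ring
  · simp only [zpow_neg, zpow_one]
    congr 1 <;> congr 1 <;> ring

lemma carE_contra {x y : ℝ} (hx : |x| < 1) (hy0 : 0 < |y|)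
    (heq : |1 - x * y| + |y| * (1 - |x|) = 1 - |y|) : False := by
  have k1 := abs_sub_abs_le_abs_sub (1:ℝ) (x*y)
  rw [abs_one, abs_mul] at k1
  nlinarith [mul_pos hy0 (show (0:ℝ) < 1 - |x| by linarith)]

lemma carE_same {x x' : ℝ}
    (hE : ∀ u v : ℝ, |u * x + v| + |u| * (1 - |x|) = |u * x' + v| + |u| * (1 - |x'|)) :
    x = x' := by
  have e1 := hE 1 (-x)
  have e2 := hE 1 (-x')
  simp only [one_mul, abs_one] at e1 e2
  rw [show x + -x = (0:ℝ) by ring, abs_zero] at e1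
  rw [show x' + -x' = (0:ℝ) by ring, abs_zero] at e2
  have h3 : |x' + -x| = |x + -x'| := by
    rw [show x' + -x = -(x + -x') by ring, abs_neg]
  have h4 : |x + -x'| = 0 := by linarith
  have := abs_eq_zero.mp h4
  linarith

/-- Identifiability of the (possibly non-causal) Cauchy AR(1) model from the family
of Fourier coefficients of its generalized spectrum. -/
theorem cauchyAR1_identifiable (a a' δ δ' : ℝ) (ha : |a| ≠ 1) (ha' : |a'| ≠ 1)
    (hδ : 0 < δ) (hδ' : 0 < δ')
    (h : ∀ (ℓ : ℤ) (u v : ℝ), cauchyAR1Coef a δ ℓ u v = cauchyAR1Coef a' δ' ℓ u v) :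
    a = a' ∧ δ = δ' := by
  have cpos := carC_pos ha hδ
  have hc : carC a δ = carC a' δ' := by
    have h0 := h 0 1 (-1)
    rw [coef_zero, coef_zero] at h0
    have h1 : Real.exp (-(2 * carC a δ)) = Real.exp (-(2 * carC a' δ')) := by linarith
    have h2 := Real.exp_eq_exp.mp h1
    linarith
  have hE : ∀ u v, carE a u v = carE a' u v := by
    intro u v
    have h1 := h 1 u v
    rw [coef_one, coef_one, ← hc] at h1
    have h2 : Real.exp (-(carC a δ * carE a u v)) = Real.exp (-(carC a δ * carE a' u v)) := by
      linarith
    have h3 := Real.exp_eq_exp.mp h2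
    exact mul_left_cancel₀ cpos.ne' (by linarith)
  have haa : a = a' := by
    rcases ha.lt_or_gt with h1 | h1 <;> rcases ha'.lt_or_gt with h2 | h2
    · -- both stationary
      refine carE_same (fun u v => ?_)
      have := hE u v
      simpa only [carE, if_pos h1, if_pos h2] using this
    · -- |a| < 1 < |a'|
      exfalso
      obtain ⟨hb0, hb1⟩ := abs_inv_mem h2
      have e := hE (-a'⁻¹) 1
      simp only [carE, if_pos h1, if_neg (not_lt.mpr h2.le), one_mul, abs_one, abs_neg] at e
      rw [show a'⁻¹ + -a'⁻¹ = (0:ℝ) by ring, abs_zero,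
        show -a'⁻¹ * a + 1 = 1 - a * a'⁻¹ by ring] at e
      exact carE_contra h1 hb0 (by linarith)
    · -- |a'| < 1 < |a|
      exfalso
      obtain ⟨hb0, hb1⟩ := abs_inv_mem h1
      have e := hE (-a⁻¹) 1
      simp only [carE, if_neg (not_lt.mpr h1.le), if_pos h2, one_mul, abs_one, abs_neg] at e
      rw [show a⁻¹ + -a⁻¹ = (0:ℝ) by ring, abs_zero,
        show -a⁻¹ * a' + 1 = 1 - a' * a⁻¹ by ring] at e
      exact carE_contra h2 hb0 (by linarith)
    · -- both explosive
      obtain ⟨hb0, hb1⟩ := abs_inv_mem h1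
      obtain ⟨hb0', hb1'⟩ := abs_inv_mem h2
      have key : a⁻¹ = a'⁻¹ := by
        refine carE_same (fun u v => ?_)
        have := hE v u
        simpa only [carE, if_neg (not_lt.mpr h1.le), if_neg (not_lt.mpr h2.le)] using this
      exact inv_injective key
  refine ⟨haa, ?_⟩
  rw [haa] at hc
  unfold carC at hc
  rcases ha'.lt_or_gt with h1 | h1
  · rw [if_pos h1, if_pos h1] at hc
    have hpos : (0:ℝ) < 1 - |a'| := by linarith
    rw [div_eq_mul_inv, div_eq_mul_inv] at hc
    exact mul_right_cancel₀ (inv_ne_zero hpos.ne') hc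
  · rw [if_neg (not_lt.mpr h1.le), if_neg (not_lt.mpr h1.le)] at hc
    obtain ⟨hb0, hb1⟩ := abs_inv_mem h1
    have hk : |a'⁻¹| / (1 - |a'⁻¹|) ≠ 0 := (div_pos hb0 (by linarith)).ne'
    rw [mul_div_assoc, mul_div_assoc] at hc
    exact mul_right_cancel₀ hk hc
end

section
/- Let δ, δ' > 0, α, α' ∈ (0,1], p, p' ∈ (0,1). For ℓ ∈ ℤ and u, v ∈ ℝ define the complex number, for ℓ ≥ 0, C_{ℓ,p,δ,α}(u,v) = exp(−(δ/(1 − p^α))·[(1 − e^{iu})^α·(1 − p^{αℓ}) + (1 − e^{iv}(1 − p^ℓ + p^ℓ·e^{iu}))^α]) − exp(−(δ/(1 − p^α))·[(1 − e^{iu})^α + (1 − e^{iv})^α]), and for ℓ < 0, C_{ℓ,p,δ,α}(u,v) = C_{|ℓ|,p,δ,α}(v,u), where z^α denotes the principal complex power exp(α·Log z) with Log the principal logarithm. If C_{ℓ,p,δ,α}(u,v) = C_{ℓ,p',δ',α'}(u,v) for all ℓ ∈ ℤ and all u, v ∈ ℝ, then δ = δ', α = α', and p = p'. -/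
open Real

/-- Fourier coefficients of the generalized spectrum of the integer-valued AR(1)
model with discrete stable innovations, for nonnegative lag `ℓ`.  Complex powers
`z ^ (α : ℂ)` are principal powers. -/
noncomputable def inarCoefNN (p δ α : ℝ) (ℓ : ℤ) (u v : ℝ) : ℂ :=
  Complex.exp (-(((δ / (1 - p ^ α) : ℝ)) : ℂ) *
      ((1 - Complex.exp ((u : ℂ) * Complex.I)) ^ (α : ℂ) *
          (1 - ((p ^ (α * (ℓ : ℝ)) : ℝ) : ℂ)) +
        (1 - Complex.exp ((v : ℂ) * Complex.I) *
            (1 - ((p ^ ℓ : ℝ) : ℂ) + ((p ^ ℓ : ℝ) : ℂ) *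
              Complex.exp ((u : ℂ) * Complex.I))) ^ (α : ℂ)))
    - Complex.exp (-(((δ / (1 - p ^ α) : ℝ)) : ℂ) *
        ((1 - Complex.exp ((u : ℂ) * Complex.I)) ^ (α : ℂ) +
          (1 - Complex.exp ((v : ℂ) * Complex.I)) ^ (α : ℂ)))

/-- Fourier coefficients of the generalized spectrum of the integer-valued AR(1)
model with discrete stable innovations, for arbitrary lag `ℓ ∈ ℤ`. -/
noncomputable def inarCoef (p δ α : ℝ) (ℓ : ℤ) (u v : ℝ) : ℂ :=
  if 0 ≤ ℓ then inarCoefNN p δ α ℓ u v else inarCoefNN p δ α (-ℓ) v u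

lemma coefNN_pi (p δ α : ℝ) (hp0 : 0 < p) (hp1 : p < 1) (n : ℕ) :
    inarCoefNN p δ α (n : ℤ) π π =
      ((Real.exp (-(δ / (1 - p ^ α)) *
          ((2:ℝ) ^ α * (1 - (p ^ α) ^ n) + (2:ℝ) ^ α * (1 - p ^ n) ^ α))
        - Real.exp (-(δ / (1 - p ^ α)) * ((2:ℝ) ^ α + (2:ℝ) ^ α)) : ℝ) : ℂ) := by
  have ht1 : p ^ n ≤ 1 := pow_le_one₀ hp0.le hp1.le
  unfold inarCoefNN
  rw [Complex.exp_pi_mul_I]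
  have e1 : ((1:ℂ) - (-1) : ℂ) = ((2:ℝ):ℂ) := by norm_num
  have e2 : (1 - (-1) * (1 - ((p ^ (n:ℤ) : ℝ):ℂ) + ((p ^ (n:ℤ) : ℝ):ℂ) * (-1)) : ℂ)
      = (((2 * (1 - p ^ n) : ℝ)):ℂ) := by
    push_cast [zpow_natCast]
    ring
  rw [e1, e2, ← Complex.ofReal_cpow (by norm_num) α,
    ← Complex.ofReal_cpow (by linarith) α]
  have e3 : (p ^ (α * ((n:ℤ):ℝ)) : ℝ) = (p ^ α) ^ n := by
    rw [show ((n:ℤ):ℝ) = (n:ℝ) by push_cast; ring, Real.rpow_mul hp0.le,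
      Real.rpow_natCast]
  have e4 : ((2 * (1 - p ^ n) : ℝ)) ^ α = (2:ℝ) ^ α * (1 - p ^ n) ^ α :=
    Real.mul_rpow (by norm_num) (by linarith)
  rw [e3, e4]
  push_cast
  ring_nf

lemma aux_le {a b C : ℝ} (hb : 0 < b) (h : ∀ n : ℕ, 1 ≤ n → a ^ n ≤ C * b ^ n) :
    a ≤ b := by
  by_contra hab
  push_neg at hab
  have h1 : 1 < a / b := (one_lt_div hb).2 hab
  obtain ⟨n, hn⟩ := pow_unbounded_of_one_lt C h1
  have h2 : C < (a / b) ^ (n + 1) :=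
    lt_of_lt_of_le hn (pow_le_pow_right₀ h1.le (Nat.le_succ n))
  have h3 : a ^ (n + 1) ≤ C * b ^ (n + 1) := h _ (Nat.le_add_left 1 n)
  rw [div_pow, lt_div_iff₀ (by positivity)] at h2
  linarith

/-- Identifiability of the integer-valued AR(1) model with discrete stable
innovations from the family of Fourier coefficients of its generalized spectrum. -/
theorem inar_identifiable (δ δ' α α' p p' : ℝ)
    (hδ : 0 < δ) (hδ' : 0 < δ')
    (hα : α ∈ Set.Ioc (0 : ℝ) 1) (hα' : α' ∈ Set.Ioc (0 : ℝ) 1)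
    (hp : p ∈ Set.Ioo (0 : ℝ) 1) (hp' : p' ∈ Set.Ioo (0 : ℝ) 1)
    (h : ∀ (ℓ : ℤ) (u v : ℝ), inarCoef p δ α ℓ u v = inarCoef p' δ' α' ℓ u v) :
    δ = δ' ∧ α = α' ∧ p = p' := by
  obtain ⟨hα0, hα1⟩ := hα
  obtain ⟨hα'0, hα'1⟩ := hα'
  obtain ⟨hp0, hp1⟩ := hp
  obtain ⟨hp'0, hp'1⟩ := hp'
  have hpa : p ^ α < 1 := Real.rpow_lt_one hp0.le hp1 hα0
  have hpa' : p' ^ α' < 1 := Real.rpow_lt_one hp'0.le hp'1 hα'0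
  have hpa0 : 0 < p ^ α := Real.rpow_pos_of_pos hp0 α
  have hpa0' : 0 < p' ^ α' := Real.rpow_pos_of_pos hp'0 α'
  have hc : 0 < δ / (1 - p ^ α) := div_pos hδ (by linarith)
  have hc' : 0 < δ' / (1 - p' ^ α') := div_pos hδ' (by linarith)
  have h2a : (0:ℝ) < (2:ℝ) ^ α := Real.rpow_pos_of_pos two_pos α
  have h2a' : (0:ℝ) < (2:ℝ) ^ α' := Real.rpow_pos_of_pos two_pos α'
  set c := δ / (1 - p ^ α) with hc_def
  set c' := δ' / (1 - p' ^ α') with hc'_def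
  have key : ∀ n : ℕ,
      Real.exp (-c * ((2:ℝ)^α * (1 - (p^α)^n) + (2:ℝ)^α * (1-p^n)^α))
        - Real.exp (-c * ((2:ℝ)^α + (2:ℝ)^α))
      = Real.exp (-c' * ((2:ℝ)^α' * (1 - (p'^α')^n) + (2:ℝ)^α' * (1-p'^n)^α'))
        - Real.exp (-c' * ((2:ℝ)^α' + (2:ℝ)^α')) := by
    intro n
    have hh := h (n:ℤ) π π
    rw [inarCoef, inarCoef, if_pos (Int.natCast_nonneg n), if_pos (Int.natCast_nonneg n),
      coefNN_pi p δ α hp0 hp1 n, coefNN_pi p' δ' α' hp'0 hp'1 n] at hh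
    exact_mod_cast hh
  have hA : c * ((2:ℝ)^α + (2:ℝ)^α) = c' * ((2:ℝ)^α' + (2:ℝ)^α') := by
    have h0 := key 0
    norm_num [Real.zero_rpow hα0.ne', Real.zero_rpow hα'0.ne'] at h0
    linarith [h0]
  have hA2 : c * (2:ℝ)^α = c' * (2:ℝ)^α' := by linear_combination hA / 2
  have hca : c * (2:ℝ)^α ≠ 0 := by positivity
  have main : ∀ n : ℕ,
      (1 - (p^α)^n) + (1-p^n)^α = (1 - (p'^α')^n) + (1-p'^n)^α' := by
    intro n
    have hk := key n
    have hexp : Real.exp (-c * ((2:ℝ)^α * (1 - (p^α)^n) + (2:ℝ)^α * (1-p^n)^α))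
        = Real.exp (-c' * ((2:ℝ)^α' * (1 - (p'^α')^n) + (2:ℝ)^α' * (1-p'^n)^α')) := by
      have : Real.exp (-c * ((2:ℝ)^α + (2:ℝ)^α))
          = Real.exp (-c' * ((2:ℝ)^α' + (2:ℝ)^α')) := by rw [neg_mul, neg_mul, hA]
      linarith
    have heq := Real.exp_eq_exp.mp hexp
    apply mul_left_cancel₀ hca
    linear_combination (-1:ℝ) * heq - ((1 - (p'^α')^n) + (1-p'^n)^α') * hA2
  -- basic bounds
  have hple : p ≤ p ^ α := by
    calc p = p ^ (1:ℝ) := (Real.rpow_one p).symm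
    _ ≤ p ^ α := Real.rpow_le_rpow_of_exponent_ge hp0 hp1.le hα1
  have hple' : p' ≤ p' ^ α' := by
    calc p' = p' ^ (1:ℝ) := (Real.rpow_one p').symm
    _ ≤ p' ^ α' := Real.rpow_le_rpow_of_exponent_ge hp'0 hp'1.le hα'1
  have hBle : ∀ n : ℕ, (1-p^n)^α ≤ 1 := fun n =>
    Real.rpow_le_one (by nlinarith [pow_le_one₀ hp0.le hp1.le (n := n)])
      (by nlinarith [pow_pos hp0 n]) hα0.le
  have hBle' : ∀ n : ℕ, (1-p'^n)^α' ≤ 1 := fun n =>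
    Real.rpow_le_one (by nlinarith [pow_le_one₀ hp'0.le hp'1.le (n := n)])
      (by nlinarith [pow_pos hp'0 n]) hα'0.le
  have hBge : ∀ n : ℕ, 1 ≤ n → 1 - p^n ≤ (1-p^n)^α := by
    intro n hn
    have hlt : p ^ n < 1 := pow_lt_one₀ hp0.le hp1 (by omega)
    calc (1 - p^n) = (1 - p^n) ^ (1:ℝ) := (Real.rpow_one _).symm
    _ ≤ (1-p^n)^α := Real.rpow_le_rpow_of_exponent_ge (by linarith) (by nlinarith [pow_pos hp0 n]) hα1
  have hBge' : ∀ n : ℕ, 1 ≤ n → 1 - p'^n ≤ (1-p'^n)^α' := by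
    intro n hn
    have hlt : p' ^ n < 1 := pow_lt_one₀ hp'0.le hp'1 (by omega)
    calc (1 - p'^n) = (1 - p'^n) ^ (1:ℝ) := (Real.rpow_one _).symm
    _ ≤ (1-p'^n)^α' := Real.rpow_le_rpow_of_exponent_ge (by linarith) (by nlinarith [pow_pos hp'0 n]) hα'1
  -- Bernoulli lower bounds
  have hBer : ∀ n : ℕ, (1-p^n)^α ≤ 1 - α * p^n := by
    intro n
    have := rpow_one_add_le_one_add_mul_self (s := -(p^n))
      (by nlinarith [pow_le_one₀ hp0.le hp1.le (n := n)]) hα0.le hα1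
    calc (1-p^n)^α = (1 + -(p^n))^α := by ring_nf
    _ ≤ 1 + α * -(p^n) := this
    _ = 1 - α * p^n := by ring
  have hBer' : ∀ n : ℕ, (1-p'^n)^α' ≤ 1 - α' * p'^n := by
    intro n
    have := rpow_one_add_le_one_add_mul_self (s := -(p'^n))
      (by nlinarith [pow_le_one₀ hp'0.le hp'1.le (n := n)]) hα'0.le hα'1
    calc (1-p'^n)^α' = (1 + -(p'^n))^α' := by ring_nf
    _ ≤ 1 + α' * -(p'^n) := this
    _ = 1 - α' * p'^n := by ring
  -- step 1 : p ^ α = p' ^ α'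
  have hrr : p ^ α = p' ^ α' := by
    have h1 : p ^ α ≤ p' ^ α' := by
      apply aux_le hpa0' (C := 2)
      intro n hn
      have hm := main n
      linarith [hBle n, hBge' n hn, pow_le_pow_left₀ hp'0.le hple' n]
    have h2 : p' ^ α' ≤ p ^ α := by
      apply aux_le hpa0 (C := 2)
      intro n hn
      have hm := main n
      linarith [hBle' n, hBge n hn, pow_le_pow_left₀ hp0.le hple n]
    linarith
  -- equal rpow parts
  have hB : ∀ n : ℕ, (1-p^n)^α = (1-p'^n)^α' := by
    intro n
    have := main n
    rw [hrr] at this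
    linarith
  -- step 2 : p = p'
  have hpp : p = p' := by
    have h1 : p ≤ p' := by
      apply aux_le hp'0 (C := 1/α)
      intro n hn
      have hb := hB n
      have := hBer n
      have := hBge' n hn
      rw [div_mul_eq_mul_div, le_div_iff₀ hα0]
      linarith
    have h2 : p' ≤ p := by
      apply aux_le hp0 (C := 1/α')
      intro n hn
      have hb := hB n
      have := hBer' n
      have := hBge n hn
      rw [div_mul_eq_mul_div, le_div_iff₀ hα'0]
      linarith
    linarith
  -- step 3 : α = α'
  have haa : α = α' := by
    have hb := hB 1
    rw [pow_one, pow_one, ← hpp] at hb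
    have hlog := congrArg Real.log hb
    rw [Real.log_rpow (by linarith), Real.log_rpow (by linarith)] at hlog
    have hln : Real.log (1 - p) ≠ 0 :=
      ne_of_lt (Real.log_neg (by linarith) (by linarith))
    exact mul_right_cancel₀ hln hlog
  -- step 4 : δ = δ'
  have hdd : δ = δ' := by
    have hcc : c = c' := by
      rw [haa] at hA
      exact mul_right_cancel₀ (by positivity : (2:ℝ)^α' + (2:ℝ)^α' ≠ 0) hA
    rw [hc_def, hc'_def, haa, hpp] at hcc
    have hne : (1:ℝ) - p' ^ α' ≠ 0 := by linarith
    rw [div_eq_div_iff hne hne] at hcc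
    exact mul_right_cancel₀ hne hcc
  exact ⟨hdd, haa, hpp⟩
end

section
/- Let p ∈ (0,1), δ > 0, α ∈ (0,1]. Suppose G : [0,1] → ℝ is continuous at 1 with G(1) = 1 and satisfies G(x) = G(1 − p(1 − x))·exp(−δ(1 − x)^α) for all x ∈ [0,1]. Then G(x) = exp(−δ(1 − x)^α/(1 − p^α)) for all x ∈ [0,1]. -/
open Real

/-- Uniqueness of the stationary pgf for the integer-valued AR(1) recursion with
discrete stable innovations: any function `G` on `[0,1]`, continuous at `1` with
`G(1) = 1`, satisfying the invariance equation
`G(x) = G(1 − p(1 − x)) · exp(−δ(1 − x)^α)` must equal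
`x ↦ exp(−δ(1 − x)^α/(1 − p^α))`. -/
theorem stationary_pgf_unique (p δ α : ℝ)
    (hp : p ∈ Set.Ioo (0 : ℝ) 1) (hδ : 0 < δ) (hα : α ∈ Set.Ioc (0 : ℝ) 1)
    (G : ℝ → ℝ)
    (hGcont : ContinuousWithinAt G (Set.Icc (0 : ℝ) 1) 1)
    (hG1 : G 1 = 1)
    (hGeq : ∀ x ∈ Set.Icc (0 : ℝ) 1,
      G x = G (1 - p * (1 - x)) * Real.exp (-(δ * (1 - x) ^ α))) :
    ∀ x ∈ Set.Icc (0 : ℝ) 1,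
      G x = Real.exp (-(δ * (1 - x) ^ α) / (1 - p ^ α)) := by
  obtain ⟨hp0, hp1⟩ := hp
  obtain ⟨hα0, hα1⟩ := hα
  intro x hx
  obtain ⟨hx0, hx1⟩ := hx
  set c : ℝ := (1 - x) ^ α with hc
  set r : ℝ := p ^ α with hr
  have hr0 : 0 < r := Real.rpow_pos_of_pos hp0 α
  have hr1 : r < 1 := Real.rpow_lt_one hp0.le hp1 hα0
  -- the iterates
  set y : ℕ → ℝ := fun n => 1 - p ^ n * (1 - x) with hy
  have hymem : ∀ n, y n ∈ Set.Icc (0 : ℝ) 1 := by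
    intro n
    have h1 : p ^ n ≤ 1 := pow_le_one₀ hp0.le hp1.le
    have h2 : (0:ℝ) ≤ p ^ n := pow_nonneg hp0.le n
    have h3 : (0:ℝ) ≤ 1 - x := by linarith
    constructor
    · have : p ^ n * (1 - x) ≤ 1 * 1 :=
        mul_le_mul h1 (by linarith) h3 zero_le_one
      simp only [hy]; nlinarith
    · simp only [hy]; nlinarith
  have hpow : ∀ n : ℕ, (1 - y n) ^ α = r ^ n * c := by
    intro n
    have h3 : (0:ℝ) ≤ 1 - x := by linarith
    have : 1 - y n = p ^ n * (1 - x) := by simp [hy]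
    rw [this, Real.mul_rpow (pow_nonneg hp0.le n) h3, ← Real.rpow_natCast p n,
      ← Real.rpow_natCast r n, hr, ← Real.rpow_mul hp0.le, ← Real.rpow_mul hp0.le,
      mul_comm α (n:ℝ)]
  -- key iteration identity
  have key : ∀ n : ℕ,
      G x = G (y n) * Real.exp (-(δ * c * ∑ k ∈ Finset.range n, r ^ k)) := by
    intro n
    induction n with
    | zero => simp [hy]
    | succ n ih =>
      have hstep := hGeq (y n) (hymem n)
      have hy' : 1 - p * (1 - y n) = y (n + 1) := by
        simp only [hy]; ring
      rw [hy', hpow n] at hstep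
      rw [ih, hstep, mul_assoc, ← Real.exp_add]
      congr 2
      rw [Finset.sum_range_succ]
      ring
  -- limits
  have hylim : Filter.Tendsto y Filter.atTop (nhds 1) := by
    have hpn : Filter.Tendsto (fun n => p ^ n) Filter.atTop (nhds 0) :=
      tendsto_pow_atTop_nhds_zero_of_lt_one hp0.le hp1
    have := (hpn.mul_const (1 - x)).const_sub 1
    simpa using this
  have hylim' : Filter.Tendsto y Filter.atTop (nhdsWithin 1 (Set.Icc 0 1)) :=
    tendsto_nhdsWithin_of_tendsto_nhds_of_eventually_within y hylim
      (Filter.Eventually.of_forall hymem)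
  have hGlim : Filter.Tendsto (fun n => G (y n)) Filter.atTop (nhds 1) := by
    have := hGcont.tendsto.comp hylim'
    rwa [hG1] at this
  have hsum : Filter.Tendsto (fun n => ∑ k ∈ Finset.range n, r ^ k)
      Filter.atTop (nhds (1 - r)⁻¹) :=
    (hasSum_geometric_of_lt_one hr0.le hr1).tendsto_sum_nat
  have hexp : Filter.Tendsto
      (fun n => Real.exp (-(δ * c * ∑ k ∈ Finset.range n, r ^ k)))
      Filter.atTop (nhds (Real.exp (-(δ * c * (1 - r)⁻¹)))) :=
    (Real.continuous_exp.tendsto _).comp (((hsum.const_mul (δ * c)).neg))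
  have hall : Filter.Tendsto (fun _ : ℕ => G x) Filter.atTop
      (nhds (1 * Real.exp (-(δ * c * (1 - r)⁻¹)))) := by
    have := hGlim.mul hexp
    exact this.congr fun n => (key n).symm
  have := tendsto_nhds_unique tendsto_const_nhds hall
  rw [this, one_mul]
  congr 1
  field_simp
end

section
/- Let δ > 0 and let p_δ : ℝ → ℝ be the Cauchy density p_δ(y) = δ/(π(δ² + y²)). Then for every x ∈ ℝ, ∫_ℝ |p_δ(ξ + x) − p_δ(ξ)| dξ ≤ (2/(πδ))·|x|. -/
open Real MeasureTheory Set Filter Topology ProbabilityTheory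
open scoped NNReal

/-!
Let `p` be the Cauchy density and `F` its distribution function `1/2 + arctan (ξ / δ) / π`.
For `x ≥ 0` the difference `g ξ = p (ξ + x) - p ξ` has the primitive `G ξ = F (ξ + x) - F ξ`,
which vanishes at `±∞`, and since `p` decreases in `|ξ|`, `g` is nonnegative left of `-x / 2`
and nonpositive right of it. Hence `∫ |g| = 2 G (-x / 2) = (4 / π) arctan (x / (2δ))`, and
`arctan t ≤ t` gives the bound. Negative shifts reduce to positive ones by translation.
-/

theorem Real.arctan_le_self {t : ℝ} (ht : 0 ≤ t) : arctan t ≤ t :=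
  calc arctan t ≤ tan (arctan t) := le_tan (arctan_nonneg.2 ht) (arctan_lt_pi_div_two t)
    _ = t := tan_arctan t

theorem Filter.Tendsto.sub_comp_add_const {F : ℝ → ℝ} {l : Filter ℝ} {L : ℝ}
    (hF : Tendsto F l (𝓝 L)) {x : ℝ} (hx : Tendsto (· + x) l l) :
    Tendsto (fun y ↦ F (y + x) - F y) l (𝓝 0) := by
  simpa using (hF.comp hx).sub hF

theorem integral_abs_eq_two_mul_of_sign_change {g G : ℝ → ℝ} {c : ℝ}
    (hG : ∀ ξ, HasDerivAt G (g ξ) ξ) (hg : Integrable g)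
    (hBot : Tendsto G atBot (𝓝 0)) (hTop : Tendsto G atTop (𝓝 0))
    (hleft : ∀ ξ ≤ c, 0 ≤ g ξ) (hright : ∀ ξ > c, g ξ ≤ 0) :
    ∫ ξ, |g ξ| = 2 * G c := by
  have hIic : ∫ ξ in Iic c, |g ξ| = G c := by
    rw [setIntegral_congr_fun measurableSet_Iic fun ξ hξ ↦ abs_of_nonneg (hleft ξ hξ),
      integral_Iic_of_hasDerivAt_of_tendsto' (fun ξ _ ↦ hG ξ) hg.integrableOn hBot, sub_zero]
  have hIoi : ∫ ξ in Ioi c, |g ξ| = G c := by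
    rw [setIntegral_congr_fun measurableSet_Ioi fun ξ hξ ↦ abs_of_nonpos (hright ξ hξ),
      integral_neg, integral_Ioi_of_hasDerivAt_of_tendsto' (fun ξ _ ↦ hG ξ) hg.integrableOn hTop,
      zero_sub, neg_neg]
  rw [← intervalIntegral.integral_Iic_add_Ioi (b := c) hg.abs.integrableOn hg.abs.integrableOn,
    hIic, hIoi, two_mul]

theorem integral_abs_comp_sub_sub_eq {f : ℝ → ℝ} (x : ℝ) :
    ∫ ξ, |f (ξ - x) - f ξ| = ∫ ξ, |f (ξ + x) - f ξ| := by
  rw [← integral_add_right_eq_self (fun ξ ↦ |f (ξ - x) - f ξ|) x]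
  simp only [add_sub_cancel_right, abs_sub_comm]

namespace ProbabilityTheory

/-- For `γ = 0` this is the constant `1 / 2`, not the distribution function of `dirac x₀`. -/
noncomputable def cauchyCDFReal (x₀ : ℝ) (γ : ℝ≥0) (y : ℝ) : ℝ :=
  2⁻¹ + π⁻¹ * arctan ((y - x₀) / γ)

theorem hasDerivAt_cauchyCDFReal (x₀ : ℝ) {γ : ℝ≥0} (hγ : γ ≠ 0) (y : ℝ) :
    HasDerivAt (cauchyCDFReal x₀ γ) (cauchyPDFReal x₀ γ y) y := by
  have hγ' : (γ : ℝ) ≠ 0 := by exact_mod_cast hγ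
  refine ((((hasDerivAt_id y).sub_const x₀).div_const (γ : ℝ)).arctan.const_mul π⁻¹
    |>.const_add 2⁻¹).congr_deriv ?_
  rw [cauchyPDFReal_def', id, NNReal.coe_inv]
  field_simp

theorem tendsto_cauchyCDFReal_atTop (x₀ : ℝ) {γ : ℝ≥0} (hγ : γ ≠ 0) :
    Tendsto (cauchyCDFReal x₀ γ) atTop (𝓝 1) := by
  have hγ' : (0 : ℝ) < γ := by positivity
  have h := ((tendsto_arctan_atTop.mono_right nhdsWithin_le_nhds).comp
    ((tendsto_atTop_add_const_right _ (-x₀) tendsto_id).atTop_div_const hγ')).const_mul π⁻¹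
    |>.const_add 2⁻¹
  convert h using 2
  · simp only [cauchyCDFReal, Function.comp_apply, id, sub_eq_add_neg]
  · field_simp
    norm_num

theorem tendsto_cauchyCDFReal_atBot (x₀ : ℝ) {γ : ℝ≥0} (hγ : γ ≠ 0) :
    Tendsto (cauchyCDFReal x₀ γ) atBot (𝓝 0) := by
  have hγ' : (0 : ℝ) < γ := by positivity
  have h := ((tendsto_arctan_atBot.mono_right nhdsWithin_le_nhds).comp
    ((tendsto_atBot_add_const_right _ (-x₀) tendsto_id).atBot_div_const hγ')).const_mul π⁻¹
    |>.const_add 2⁻¹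
  convert h using 2
  · simp only [cauchyCDFReal, Function.comp_apply, id, sub_eq_add_neg]
  · field_simp
    norm_num

theorem cauchyPDFReal_le_cauchyPDFReal {x₀ y z : ℝ} (γ : ℝ≥0)
    (h : (y - x₀) ^ 2 ≤ (z - x₀) ^ 2) : cauchyPDFReal x₀ γ z ≤ cauchyPDFReal x₀ γ y := by
  rcases eq_or_ne γ 0 with rfl | hγ
  · simp
  have hγ' : (0 : ℝ) < γ := by positivity
  simp only [cauchyPDFReal_def]
  gcongr

theorem integral_abs_cauchyPDFReal_add_sub_of_nonneg (x₀ : ℝ) {γ : ℝ≥0} (hγ : γ ≠ 0) {x : ℝ}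
    (hx : 0 ≤ x) :
    ∫ ξ, |cauchyPDFReal x₀ γ (ξ + x) - cauchyPDFReal x₀ γ ξ| = 4 / π * arctan (x / (2 * γ)) := by
  set F := cauchyCDFReal x₀ γ
  rw [integral_abs_eq_two_mul_of_sign_change (G := fun y ↦ F (y + x) - F y) (c := x₀ - x / 2)
    (fun ξ ↦ ((hasDerivAt_cauchyCDFReal x₀ hγ (ξ + x)).comp_add_const ξ x).sub
      (hasDerivAt_cauchyCDFReal x₀ hγ ξ))
    (((integrable_cauchyPDFReal x₀).comp_add_right x).sub (integrable_cauchyPDFReal x₀))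
    ((tendsto_cauchyCDFReal_atBot x₀ hγ).sub_comp_add_const
      (tendsto_atBot_add_const_right _ x tendsto_id))
    ((tendsto_cauchyCDFReal_atTop x₀ hγ).sub_comp_add_const
      (tendsto_atTop_add_const_right _ x tendsto_id))
    (fun ξ hξ ↦ sub_nonneg.2 (cauchyPDFReal_le_cauchyPDFReal γ (by nlinarith)))
    (fun ξ hξ ↦ sub_nonpos.2 (cauchyPDFReal_le_cauchyPDFReal γ (by nlinarith)))]
  have harg_add : (x₀ - x / 2 + x - x₀) / γ = x / (2 * γ) := by ring
  have harg_sub : (x₀ - x / 2 - x₀) / γ = -(x / (2 * γ)) := by ring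
  simp only [F, cauchyCDFReal, harg_add, harg_sub, arctan_neg]
  ring

theorem integral_abs_cauchyPDFReal_add_sub (x₀ : ℝ) {γ : ℝ≥0} (hγ : γ ≠ 0) (x : ℝ) :
    ∫ ξ, |cauchyPDFReal x₀ γ (ξ + x) - cauchyPDFReal x₀ γ ξ| = 4 / π * arctan (|x| / (2 * γ)) := by
  rcases le_total 0 x with hx | hx
  · rw [abs_of_nonneg hx, integral_abs_cauchyPDFReal_add_sub_of_nonneg x₀ hγ hx]
  · rw [← integral_abs_comp_sub_sub_eq, abs_of_nonpos hx,
      ← integral_abs_cauchyPDFReal_add_sub_of_nonneg x₀ hγ (neg_nonneg.2 hx)]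
    simp only [sub_eq_add_neg]

theorem integral_abs_cauchyPDFReal_add_sub_le (x₀ : ℝ) {γ : ℝ≥0} (hγ : γ ≠ 0) (x : ℝ) :
    ∫ ξ, |cauchyPDFReal x₀ γ (ξ + x) - cauchyPDFReal x₀ γ ξ| ≤ 2 / (π * γ) * |x| := by
  have hγ' : (0 : ℝ) < γ := by positivity
  calc ∫ ξ, |cauchyPDFReal x₀ γ (ξ + x) - cauchyPDFReal x₀ γ ξ|
      = 4 / π * arctan (|x| / (2 * γ)) := integral_abs_cauchyPDFReal_add_sub x₀ hγ x
    _ ≤ 4 / π * (|x| / (2 * γ)) := by gcongr; exact arctan_le_self (by positivity)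
    _ = 2 / (π * γ) * |x| := by field_simp; ring

end ProbabilityTheory

/-- Variation bound for the Cauchy density `p_δ(y) = δ/(π(δ² + y²))`:
for every shift `x`, `∫ |p_δ(ξ + x) − p_δ(ξ)| dξ ≤ (2/(πδ))·|x|`. -/
theorem cauchy_density_variation (δ : ℝ) (hδ : 0 < δ) :
    ∀ x : ℝ,
      ∫ ξ : ℝ, |δ / (Real.pi * (δ ^ 2 + (ξ + x) ^ 2)) -
          δ / (Real.pi * (δ ^ 2 + ξ ^ 2))| ≤ (2 / (Real.pi * δ)) * |x| := by
  lift δ to ℝ≥0 using hδ.le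
  intro x
  have hp : ∀ ξ, δ / (π * (δ ^ 2 + ξ ^ 2)) = cauchyPDFReal 0 δ ξ := fun ξ ↦ by
    rw [cauchyPDFReal_def, sub_zero, add_comm]
    field_simp
  simpa only [hp] using integral_abs_cauchyPDFReal_add_sub_le 0 (NNReal.coe_pos.1 hδ).ne' x
end

section
/- Let c, c' > 0 be real numbers. If exp(−c·u²)·(exp(−c·u²) − 1) = exp(−c'·u²)·(exp(−c'·u²) − 1) for all u ∈ ℝ, then c = c'. -/
open Real Filter Topology

/-!
Since `x (x - 1) - y (y - 1) = (x - y) (x + y - 1)`, at each `u` either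
`exp (-c u²) = exp (-c' u²)` or the two exponentials sum to `1`. Near `u = 0` both are close to
`1`, so their sum exceeds `1`; any such `u ≠ 0` gives `c u² = c' u²`, hence `c = c'`.
-/

theorem eq_of_mul_sub_one_eq_of_add_ne_one {R : Type*} [CommRing R] [IsDomain R] {x y : R}
    (h : x * (x - 1) = y * (y - 1)) (hxy : x + y ≠ 1) : x = y := by
  have hfactor : (x - y) * (x + y - 1) = 0 := by linear_combination h
  rcases mul_eq_zero.mp hfactor with hdiff | hsum
  · exact sub_eq_zero.mp hdiff
  · exact absurd (sub_eq_zero.mp hsum) hxy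

theorem eventually_one_lt_exp_add_exp (c c' : ℝ) :
    ∀ᶠ u in 𝓝 (0 : ℝ), 1 < exp (-c * u ^ 2) + exp (-c' * u ^ 2) := by
  have hcont : Continuous fun u : ℝ => exp (-c * u ^ 2) + exp (-c' * u ^ 2) := by fun_prop
  have hlim : Tendsto (fun u : ℝ => exp (-c * u ^ 2) + exp (-c' * u ^ 2)) (𝓝 0) (𝓝 2) := by
    simpa [one_add_one_eq_two] using hcont.tendsto 0
  exact hlim.eventually (lt_mem_nhds one_lt_two)

theorem gauss_exponential_identity_inj_general (c c' : ℝ)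
    (h : ∀ u : ℝ,
      Real.exp (-c * u ^ 2) * (Real.exp (-c * u ^ 2) - 1) =
        Real.exp (-c' * u ^ 2) * (Real.exp (-c' * u ^ 2) - 1)) :
    c = c' := by
  obtain ⟨u, hsum, hu⟩ :=
    ((eventually_one_lt_exp_add_exp c c').filter_mono nhdsWithin_le_nhds).and
      (self_mem_nhdsWithin : ∀ᶠ u in 𝓝[≠] (0 : ℝ), u ≠ 0) |>.exists
  have hexp := eq_of_mul_sub_one_eq_of_add_ne_one (h u) hsum.ne'
  have hmul : -c * u ^ 2 = -c' * u ^ 2 := exp_injective hexp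
  exact neg_inj.mp (mul_right_cancel₀ (pow_ne_zero 2 hu) hmul)

/-- Key analytic step in the identifiability of the Gaussian MA(1) model:
if `exp(−cu²)(exp(−cu²) − 1) = exp(−c'u²)(exp(−c'u²) − 1)` for all `u`, with
`c, c' > 0`, then `c = c'`. -/
theorem gauss_exponential_identity_inj (c c' : ℝ) (hc : 0 < c) (hc' : 0 < c')
    (h : ∀ u : ℝ,
      Real.exp (-c * u ^ 2) * (Real.exp (-c * u ^ 2) - 1) =
        Real.exp (-c' * u ^ 2) * (Real.exp (-c' * u ^ 2) - 1)) :
    c = c' :=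
  gauss_exponential_identity_inj_general c c' h
end
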